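/- arXiv:2303.04367 — 2 statements merged into one kernel-verified Lean document; each statement's English description precedes it below -/
import Mathlib

section
/- Let A ∈ SL(d,ℤ) be step-2 and let U ⊂ ℤ^d be a set invariant under Ā = (Aᵀ)⁻¹, consisting of vectors m with Ām ≠ m. Let r > 1 and let (ξ_m)_{m∈U} be complex numbers with |ξ_m| ≤ c₀|m|^{−r} for all m ∈ U. Let α ∈ ℝ^d and set λ_m^{(1)} = e^{2πi⟨Ām,α⟩}. Suppose (ζ_m)_{m∈U} are complex numbers satisfying ζ_{Ām} λ_m^{(1)} − ζ_m = ξ_m for all m ∈ U, and that ζ_n → 0 as |n| → ∞ along U. Then there exists c = c(r,A,c₀) > 0 such that |ζ_m| ≤ c|m|^{−r+1} for every m ∈ U. -/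
open MeasureTheory

namespace ParabolicKAM

/-- Points of `ℝ^d` (lifts of points of the torus `𝕋^d`). -/
abbrev Vec (d : ℕ) := Fin d → ℝ

/-- Integer vectors (Fourier frequencies). -/
abbrev IVec (d : ℕ) := Fin d → ℤ

/-- Square integer matrices. -/
abbrev Mat (d : ℕ) := Matrix (Fin d) (Fin d) ℤ

/-- The `d`-dimensional torus. -/
abbrev Td (d : ℕ) := Fin d → AddCircle (1 : ℝ)

instance : Fact ((0 : ℝ) < 1) := ⟨one_pos⟩

/-- The real matrix with the same entries as an integer matrix. -/
def rmat {d₁ d₂ : ℕ} (A : Matrix (Fin d₁) (Fin d₂) ℤ) : Matrix (Fin d₁) (Fin d₂) ℝ :=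
  A.map fun a => (a : ℝ)

/-- The affine map `x ↦ A x + α` on `ℝ^d` (a lift of the affine torus map). -/
def affR {d : ℕ} (A : Mat d) (α : Vec d) : Vec d → Vec d :=
  fun x => (rmat A).mulVec x + α

/-- `A` is parabolic (unipotent). -/
def IsParabolic {d : ℕ} (A : Mat d) : Prop := ∃ S : ℕ, (A - 1) ^ S = 0

/-- `A` is parabolic of step exactly `S`. -/
def IsStepParabolic {d : ℕ} (A : Mat d) (S : ℕ) : Prop :=
  (A - 1) ^ S = 0 ∧ (A - 1) ^ (S - 1) ≠ 0

/-- `A` is step-2 parabolic. -/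
def IsStep2 {d : ℕ} (A : Mat d) : Prop := (A - 1) ^ 2 = 0 ∧ A ≠ 1

/-- `(α, β)` is an admissible pair of translation parts: `(A - Id) β = (B - Id) α`. -/
def TAB {d : ℕ} (A B : Mat d) (α β : Vec d) : Prop :=
  (rmat (A - 1)).mulVec β = (rmat (B - 1)).mulVec α

/-- The dual matrix `Ā = (Aᵀ)⁻¹` (acting on frequencies). -/
noncomputable def dual {d : ℕ} (A : Mat d) : Mat d := A.transpose⁻¹

/-- `Â = Ā - Id`. -/
noncomputable def hat {d : ℕ} (A : Mat d) : Mat d := dual A - 1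

/-- Integer powers of a matrix. -/
noncomputable def zpowM {d : ℕ} (A : Mat d) : ℤ → Mat d
  | Int.ofNat n => A ^ n
  | Int.negSucc n => (A ^ (n + 1))⁻¹

/-- Euclidean norm of an integer vector. -/
noncomputable def inorm {d : ℕ} (m : IVec d) : ℝ :=
  Real.sqrt (∑ i, ((m i : ℝ)) ^ 2)

/-- Euclidean norm of a real vector. -/
noncomputable def rnorm {d : ℕ} (v : Vec d) : ℝ :=
  Real.sqrt (∑ i, (v i) ^ 2)

/-- Standard inner product of integer vectors. -/
def iprod {d : ℕ} (m n : IVec d) : ℤ := ∑ i, m i * n i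

/-- Euclidean operator norm of (the real matrix of) an integer matrix. -/
noncomputable def eopNorm {d : ℕ} (M : Mat d) : ℝ :=
  ‖LinearMap.toContinuousLinearMap (Matrix.toEuclideanLin (rmat M))‖

/-- `m` is a resonant vector for the dual action of `⟨A, B⟩`. -/
def Resonant {d : ℕ} (A B : Mat d) (m : IVec d) : Prop :=
  m ≠ 0 ∧
    (∃ k l : ℤ, ¬(k = 0 ∧ l = 0) ∧ (zpowM (dual A) k * zpowM (dual B) l).mulVec m = m) ∧
    ((dual A).mulVec m ≠ m ∨ (dual B).mulVec m ≠ m)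

/-- The normalization `k ∧ l = 1` for resonance pairs. -/
def NormalizedPair (k l : ℤ) : Prop :=
  (k = 1 ∧ l = 0) ∨ (k = 0 ∧ l = 1) ∨ (Int.gcd k l = 1 ∧ 0 < k)

/-- `(k, l)` is the resonance pair associated to the resonant vector `m`. -/
def IsResPair {d : ℕ} (A B : Mat d) (m : IVec d) (k l : ℤ) : Prop :=
  NormalizedPair k l ∧ k • (hat A).mulVec m + l • (hat B).mulVec m = 0

/-- `m ∈ 𝒞₁`: degenerate frequencies, fixed by the whole dual action. -/
def InC1 {d : ℕ} (A B : Mat d) (m : IVec d) : Prop :=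
  m ≠ 0 ∧ (dual A).mulVec m = m ∧ (dual B).mulVec m = m

/-- `m ∈ 𝒞₃`: nonzero, non-degenerate, non-resonant frequencies. -/
def InC3 {d : ℕ} (A B : Mat d) (m : IVec d) : Prop :=
  m ≠ 0 ∧ ¬InC1 A B m ∧ ¬Resonant A B m

/-- `s` is the step of the frequency `m`: the least `s` with `B̂^s m = 0`. -/
def stepOf {d : ℕ} (B : Mat d) (m : IVec d) (s : ℕ) : Prop :=
  ((hat B) ^ s).mulVec m = 0 ∧ ∀ t : ℕ, ((hat B) ^ t).mulVec m = 0 → s ≤ t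

/-- `m` is a lowest point on its `Ā`-orbit (for step-2 `A`, `Ā^k m = m + k Â m`). -/
def LowestOnOrbit {d : ℕ} (A : Mat d) (m : IVec d) : Prop :=
  ∀ k : ℤ, inorm m ≤ inorm (m + k • (hat A).mulVec m)

/-- The affine map of the torus with integer linear part `M` and translation `γ`. -/
noncomputable def affT {n : ℕ} (M : Mat n) (γ : Td n) : Td n → Td n :=
  fun x i => (∑ j, M i j • x j) + γ i

/-- The projection of tori induced by an integer matrix `P`. -/
noncomputable def projT {n d : ℕ} (P : Matrix (Fin n) (Fin d) ℤ) : Td d → Td n :=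
  fun x i => ∑ j, P i j • x j

/-- The point of the torus below `α ∈ ℝ^d`. -/
noncomputable def toT {d : ℕ} (α : Vec d) : Td d := fun i => (α i : AddCircle (1 : ℝ))

/-- A self-map of the torus is affine if it has the form `x ↦ M x + γ`, `M` integer. -/
def IsAffT {n : ℕ} (f : Td n → Td n) : Prop := ∃ (M : Mat n) (γ : Td n), f = affT M γ

/-- A rank-one factor of the affine `ℤ²`-action generated by `A + α` and `B + β`: a factor
action on a quotient torus, induced by a surjective integer-linear projection intertwining
the action, whose image is contained in the group generated by a single affine map. -/
structure RankOneFactorData (d : ℕ) (A B : Mat d) (α β : Vec d) : Type where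
  n : ℕ
  npos : 0 < n
  P : Matrix (Fin n) (Fin d) ℤ
  surj : Function.Surjective fun m : Fin d → ℤ => P.mulVec m
  A' : Mat n
  B' : Mat n
  α' : Td n
  β' : Td n
  intertwineA : projT P ∘ affT A (toT α) = affT A' α' ∘ projT P
  intertwineB : projT P ∘ affT B (toT β) = affT B' β' ∘ projT P
  rankOne : ∃ c : Equiv.Perm (Td n), IsAffT (⇑c) ∧
      (∃ u : Equiv.Perm (Td n), u ∈ Subgroup.zpowers c ∧ ⇑u = affT A' α') ∧
      (∃ v : Equiv.Perm (Td n), v ∈ Subgroup.zpowers c ∧ ⇑v = affT B' β')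

/-- The rank-one factor is the identity: both generators project to the identity. -/
def RankOneFactorData.IsIdentity {d : ℕ} {A B : Mat d} {α β : Vec d}
    (F : RankOneFactorData d A B α β) : Prop :=
  affT F.A' F.α' = id ∧ affT F.B' F.β' = id

/-- The rank-one factor is genuinely parabolic: some generator projects to an affine map
with non-identity unipotent linear part. -/
def RankOneFactorData.IsGenuinelyParabolic {d : ℕ} {A B : Mat d} {α β : Vec d}
    (F : RankOneFactorData d A B α β) : Prop :=
  (IsParabolic F.A' ∧ F.A' ≠ 1) ∨ (IsParabolic F.B' ∧ F.B' ≠ 1)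

/-- The linear action `⟨A, B⟩` is locked: every admissible affine action above it has a
rank-one factor that is the identity or genuinely parabolic. -/
def IsLocked {d : ℕ} (A B : Mat d) : Prop :=
  ∀ α β : Vec d, TAB A B α β →
    ∃ F : RankOneFactorData d A B α β, F.IsIdentity ∨ F.IsGenuinelyParabolic

/-- `f : ℝ^d → ℝ^d` is `ℤ^d`-periodic. -/
def ZPeriodic {d : ℕ} (f : Vec d → Vec d) : Prop :=
  ∀ (x : Vec d) (v : IVec d), f (x + fun i => (v i : ℝ)) = f x

/-- The `C^r` norm of a map `ℝ^d → ℝ^d`. -/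
noncomputable def crNorm {d : ℕ} (r : ℕ) (f : Vec d → Vec d) : ℝ :=
  ⨆ i : Fin (r + 1), ⨆ x : Vec d, ‖iteratedFDeriv ℝ (i : ℕ) f x‖

/-- `f` has zero average over the fundamental domain. -/
def ZeroAvg {d : ℕ} (f : Vec d → Vec d) : Prop :=
  ∫ x in Set.Icc (0 : Vec d) 1, f x = 0

/-- KAM-rigidity, under volume preserving perturbations, of the affine `ℤ²`-action
generated by `a = A + α` and `b = B + β` (expressed on `ℤ^d`-periodic lifts to `ℝ^d`). -/
def KAMRigid {d : ℕ} (A B : Mat d) (α β : Vec d) : Prop :=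
  ∃ σ r₀ : ℕ, σ ≤ r₀ ∧ ∃ ε : ℝ, 0 < ε ∧ ∃ C : ℝ, 0 < C ∧
    ∀ r : ℕ, r₀ ≤ r → ∀ f g : Vec d → Vec d,
      ContDiff ℝ (⊤ : ℕ∞) f → ContDiff ℝ (⊤ : ℕ∞) g → ZPeriodic f → ZPeriodic g →
      (fun x => affR A α x + f x) ∘ (fun x => affR B β x + g x) =
        (fun x => affR B β x + g x) ∘ (fun x => affR A α x + f x) →
      MeasurePreserving (fun x => affR A α x + f x) volume volume →
      MeasurePreserving (fun x => affR B β x + g x) volume volume →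
      crNorm r f ≤ ε → crNorm r g ≤ ε → ZeroAvg f → ZeroAvg g →
      ∃ h : Vec d → Vec d, ContDiff ℝ (⊤ : ℕ∞) h ∧ ZPeriodic h ∧
        crNorm (r - σ) h ≤ C * ε ∧
        Function.Bijective (fun x : Vec d => x + h x) ∧
        MeasurePreserving (fun x : Vec d => x + h x) volume volume ∧
        (fun x : Vec d => x + h x) ∘ (fun x => affR A α x + f x) =
          affR A α ∘ (fun x : Vec d => x + h x) ∧
        (fun x : Vec d => x + h x) ∘ (fun x => affR B β x + g x) =
          affR B β ∘ (fun x : Vec d => x + h x)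

/-- Ergodicity of the affine `ℤ²`-action with respect to Haar measure on the torus. -/
def JointlyErgodic {d : ℕ} (A B : Mat d) (α β : Vec d) : Prop :=
  ∀ s : Set (Td d), MeasurableSet s →
    affT A (toT α) ⁻¹' s = s → affT B (toT β) ⁻¹' s = s →
    volume s = 0 ∨ volume sᶜ = 0

/-- The linear map whose kernel is the space `𝒯(A,B)` of admissible translation parts. -/
noncomputable def TABmap {d : ℕ} (A B : Mat d) : (Vec d × Vec d) →ₗ[ℝ] Vec d :=
  ((rmat (A - 1)).mulVecLin.comp (LinearMap.snd ℝ (Vec d) (Vec d))) -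
    ((rmat (B - 1)).mulVecLin.comp (LinearMap.fst ℝ (Vec d) (Vec d)))

/-- The space `𝒯(A,B)` of admissible translation parts, as a subspace of `ℝ^d × ℝ^d`. -/
noncomputable def TABsub {d : ℕ} (A B : Mat d) : Submodule ℝ (Vec d × Vec d) :=
  LinearMap.ker (TABmap A B)

/-- `e(m, x) = e^{2π i ⟨m, x⟩}`. -/
noncomputable def eF {d : ℕ} (m : IVec d) (x : Vec d) : ℂ :=
  Complex.exp (2 * (Real.pi : ℂ) * Complex.I * ∑ i, (m i : ℂ) * (x i : ℂ))

/-- `c : ℤ → ℤ → ℝ^d` is the family of translation parts `α_{k,l} = a^k b^l - A^k B^l`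
of the elements of the affine action generated by `a = A + α` and `b = B + β`. -/
def IsTransFamily {d : ℕ} (A B : Mat d) (α β : Vec d) (c : ℤ → ℤ → Vec d) : Prop :=
  c 0 0 = 0 ∧ (∀ k l : ℤ, c (k + 1) l = α + (rmat A).mulVec (c k l)) ∧
    ∀ k l : ℤ, c k (l + 1) = β + (rmat B).mulVec (c k l)

/-- The maximal translation factor of the action is `(γ,τ)`-simultaneously Diophantine. -/
def DiophTransFactor {d : ℕ} (γ τ : ℝ) (A B : Mat d) (α β : Vec d) : Prop :=
  ∀ m : IVec d, m ≠ 0 → (dual A).mulVec m = m → (dual B).mulVec m = m →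
    γ / inorm m ^ τ < max ‖1 - eF m α‖ ‖1 - eF m β‖

/-- Every resonance of the action is `(γ,τ)`-Diophantine. -/
def DiophResonances {d : ℕ} (γ τ : ℝ) (A B : Mat d) (α β : Vec d) : Prop :=
  ∀ (m : IVec d) (k l : ℤ), Resonant A B m → IsResPair A B m k l →
    ∀ c : ℤ → ℤ → Vec d, IsTransFamily A B α β c →
      γ / inorm m ^ τ < ‖1 - eF m (c k l)‖

/-- The affine action generated by `A + α`, `B + β` is `(γ,τ)`-Diophantine. -/
def DiophAction {d : ℕ} (γ τ : ℝ) (A B : Mat d) (α β : Vec d) : Prop :=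
  DiophTransFactor γ τ A B α β ∧ DiophResonances γ τ A B α β

/-- The linearized coboundary operator `D h = h ∘ a - A h` above `a = A + α`. -/
def Dop {d : ℕ} (A : Mat d) (α : Vec d) (h : Vec d → Vec d) : Vec d → Vec d :=
  fun x => h (affR A α x) - (rmat A).mulVec (h x)

/-- Generalized binomial coefficient `C(l, j) = l (l-1) ⋯ (l-j+1) / j!`
(a polynomial in `l` of degree `j`; the division is exact). -/
def zchoose (l : ℤ) (j : ℕ) : ℤ :=
  (∏ i ∈ Finset.range j, (l - (i : ℤ))) / (j.factorial : ℤ)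



section AuxCoboundary

lemma eF_norm {d : ℕ} (m : IVec d) (α : Vec d) : ‖eF m α‖ = 1 := by
  have h1 : (∑ i, (m i : ℂ) * (α i : ℂ)) = (((∑ i, (m i : ℝ) * α i) : ℝ) : ℂ) := by
    push_cast; ring
  have h2 : 2 * (Real.pi : ℂ) * Complex.I * (((∑ i, (m i : ℝ) * α i) : ℝ) : ℂ)
      = (((2 * Real.pi * ∑ i, (m i : ℝ) * α i) : ℝ) : ℂ) * Complex.I := by
    push_cast; ring
  rw [eF, h1, h2, Complex.norm_exp_ofReal_mul_I]

variable {d : ℕ} {A : Mat d}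

lemma dual_mul_transpose (hdet : A.det = 1) : dual A * A.transpose = 1 :=
  Matrix.nonsing_inv_mul _ (by simp [Matrix.det_transpose, hdet])

lemma transpose_mul_dual (hdet : A.det = 1) : A.transpose * dual A = 1 :=
  Matrix.mul_nonsing_inv _ (by simp [Matrix.det_transpose, hdet])

lemma dual_eq_one_add_hat : dual A = 1 + hat A := by unfold hat; abel

lemma hat_mul_hat (hdet : A.det = 1) (h2 : (A - 1) ^ 2 = 0) : hat A * hat A = 0 := by
  have hT : (A.transpose - 1) * (A.transpose - 1) = 0 := by
    have := congrArg Matrix.transpose h2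
    simpa [sq, Matrix.transpose_mul, Matrix.transpose_sub, Matrix.transpose_one] using this
  have h1 := dual_mul_transpose hdet
  have h2' := transpose_mul_dual hdet
  have key : dual A * ((A.transpose - 1) * (A.transpose - 1)) * dual A
      = (dual A * A.transpose - dual A) * (A.transpose * dual A - dual A) := by
    noncomm_ring
  have : hat A * hat A = dual A * ((A.transpose - 1) * (A.transpose - 1)) * dual A := by
    rw [key, h1, h2']; unfold hat; noncomm_ring
  rw [this, hT]; simp

lemma zpow_dual (hdet : A.det = 1) (h2 : (A - 1) ^ 2 = 0) (k : ℤ) :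
    zpowM (dual A) k = 1 + k • hat A := by
  have hD : dual A = 1 + hat A := dual_eq_one_add_hat
  have hH := hat_mul_hat hdet h2
  have hpow : ∀ n : ℕ, (dual A) ^ n = 1 + (n : ℤ) • hat A := by
    intro n
    induction n with
    | zero => simp
    | succ n ih =>
      rw [pow_succ, ih, hD]
      push_cast
      rw [mul_add, mul_one, add_mul, one_mul, smul_mul_assoc, hH]
      simp [add_smul]; abel
  cases k with
  | ofNat n => simpa [zpowM] using hpow n
  | negSucc n =>
    show ((dual A) ^ (n + 1))⁻¹ = _
    apply Matrix.inv_eq_right_inv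
    rw [hpow (n + 1)]
    have : (Int.negSucc n) = -((n : ℤ) + 1) := rfl
    rw [this]
    rw [add_mul, one_mul, mul_add, mul_one, smul_mul_assoc, mul_smul_comm, hH]
    push_cast
    simp [add_smul, smul_smul]
    abel

lemma inorm_nonneg' {d : ℕ} (m : IVec d) : 0 ≤ inorm m := Real.sqrt_nonneg _

lemma sq_inorm {d : ℕ} (m : IVec d) : inorm m ^ 2 = ∑ i, ((m i : ℝ)) ^ 2 :=
  Real.sq_sqrt (Finset.sum_nonneg fun _ _ => sq_nonneg _)

lemma one_le_inorm {d : ℕ} {m : IVec d} (hm : m ≠ 0) : 1 ≤ inorm m := by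
  obtain ⟨i, hi⟩ : ∃ i, m i ≠ 0 := by
    by_contra h
    push_neg at h
    exact hm (funext h)
  have h1 : (1 : ℝ) ≤ ((m i : ℝ)) ^ 2 := by
    have : 1 ≤ (m i) ^ 2 := by
      rcases lt_or_gt_of_ne hi with h | h <;> nlinarith
    exact_mod_cast this
  have h2 : (1 : ℝ) ≤ ∑ j, ((m j : ℝ)) ^ 2 :=
    le_trans h1 (Finset.single_le_sum (f := fun j => ((m j : ℝ)) ^ 2)
      (fun j _ => sq_nonneg _) (Finset.mem_univ i))
  calc (1 : ℝ) = Real.sqrt 1 := by simp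
  _ ≤ inorm m := Real.sqrt_le_sqrt h2

lemma sq_inorm_add {d : ℕ} (m v : IVec d) (k : ℤ) :
    inorm (m + k • v) ^ 2
      = inorm m ^ 2 + 2 * (k : ℝ) * (∑ i, (m i : ℝ) * (v i : ℝ))
        + (k : ℝ) ^ 2 * inorm v ^ 2 := by
  rw [sq_inorm, sq_inorm, sq_inorm]
  have hterm : ∀ i : Fin d, (((m + k • v) i : ℝ)) ^ 2
      = (m i : ℝ) ^ 2 + 2 * (k : ℝ) * ((m i : ℝ) * (v i : ℝ))
        + (k : ℝ) ^ 2 * (v i : ℝ) ^ 2 := by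
    intro i
    simp only [Pi.add_apply, Pi.smul_apply, smul_eq_mul]
    push_cast
    ring
  rw [Finset.sum_congr rfl fun i _ => hterm i]
  rw [Finset.sum_add_distrib, Finset.sum_add_distrib, ← Finset.mul_sum, ← Finset.mul_sum]

lemma aux_sum {r : ℝ} (hr : 1 < r) {M : ℝ} (hM : 1 ≤ M) (N : ℕ) :
    ∑ j ∈ Finset.range N, (M + (j : ℕ)) ^ (-r) ≤ (1 + 1 / (r - 1)) * M ^ (-r + 1) := by
  have hM0 : (0 : ℝ) < M := lt_of_lt_of_le one_pos hM
  have hterm : ∀ j : ℕ, (0:ℝ) ≤ (M + (j:ℕ)) ^ (-r) := fun j => Real.rpow_nonneg (by positivity) _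
  have h1 : ∑ j ∈ Finset.range N, (M + (j:ℕ)) ^ (-r)
      ≤ M ^ (-r) + ∑ i ∈ Finset.range N, (M + ((i:ℕ) + 1 : ℕ)) ^ (-r) := by
    calc ∑ j ∈ Finset.range N, (M + (j:ℕ)) ^ (-r)
        ≤ ∑ j ∈ Finset.range (N + 1), (M + (j:ℕ)) ^ (-r) :=
          Finset.sum_le_sum_of_subset_of_nonneg (Finset.range_subset_range.2 (Nat.le_succ N))
            (fun j _ _ => hterm j)
      _ = (∑ i ∈ Finset.range N, (M + ((i:ℕ) + 1 : ℕ)) ^ (-r)) + (M + ((0:ℕ):ℝ)) ^ (-r) :=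
          Finset.sum_range_succ' _ N
      _ = M ^ (-r) + ∑ i ∈ Finset.range N, (M + ((i:ℕ) + 1 : ℕ)) ^ (-r) := by
          rw [add_comm]; norm_num
  have hanti : AntitoneOn (fun x : ℝ => x ^ (-r)) (Set.Icc M (M + N)) := by
    intro x hx y hy hxy
    exact Real.rpow_le_rpow_of_nonpos (lt_of_lt_of_le hM0 hx.1) hxy (by linarith)
  have h2 : ∑ i ∈ Finset.range N, (M + ((i:ℕ) + 1 : ℕ) : ℝ) ^ (-r)
      ≤ ∫ x in M..(M + N), x ^ (-r) := by
    have := hanti.sum_le_integral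
    simpa using this
  have h3 : ∫ x in M..(M + N), x ^ (-r)
      = ((M + N) ^ (-r + 1) - M ^ (-r + 1)) / (-r + 1) := by
    rw [integral_rpow]
    right
    constructor
    · intro h; linarith
    · intro h
      rw [Set.mem_uIcc] at h
      rcases h with ⟨h, _⟩ | ⟨h, _⟩ <;> nlinarith [Nat.cast_nonneg (α := ℝ) N]
  have h8 : (0:ℝ) < r - 1 := by linarith
  have h5 : (0:ℝ) ≤ (M + N) ^ (-r + 1) := Real.rpow_nonneg (by positivity) _
  have heq : ((M + N) ^ (-r + 1) - M ^ (-r + 1)) / (-r + 1)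
      = (M ^ (-r + 1) - (M + N) ^ (-r + 1)) / (r - 1) := by
    rw [div_eq_div_iff (by linarith) (by linarith)]; ring
  have h9 := le_trans h1 (add_le_add_right h2 _)
  rw [h3, heq] at h9
  have h10 : (M ^ (-r + 1) - (M + N) ^ (-r + 1)) / (r - 1) ≤ M ^ (-r + 1) / (r - 1) :=
    (div_le_div_iff_of_pos_right h8).2 (by linarith)
  have h7 : M ^ (-r) ≤ M ^ (-r + 1) := Real.rpow_le_rpow_of_exponent_le hM (by linarith)
  have hfin : (1 + 1 / (r - 1)) * M ^ (-r + 1)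
      = M ^ (-r + 1) + M ^ (-r + 1) / (r - 1) := by field_simp
  linarith

end AuxCoboundary

/-- **Proposition (tame bounds for solutions of the twisted coboundary equation along a
step-2 dual orbit).** Let `A` be step-2, `U ⊂ ℤ^d` invariant under `Ā` and consisting of
vectors with `Ā m ≠ m`, `r > 1`, and `|ξ_m| ≤ c₀ |m|^{-r}` on `U`. If
`ζ_{Ām} λ_m^{(1)} - ζ_m = ξ_m` on `U`, where `λ_m^{(1)} = e^{2πi⟨Ām,α⟩}`, and `ζ_n → 0`
as `|n| → ∞` along `U`, then there is `c = c(r,A,c₀) > 0` with `|ζ_m| ≤ c |m|^{-r+1}`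
for all `m ∈ U`. -/
theorem coboundary_solution_bound (d : ℕ) (A : Mat d) (hdetA : A.det = 1)
    (hA2 : IsStep2 A) (r : ℝ) (hr : 1 < r) (c₀ : ℝ) :
    ∃ c : ℝ, 0 < c ∧
      ∀ U : Set (IVec d),
        (∀ m ∈ U, ∀ k : ℤ, (zpowM (dual A) k).mulVec m ∈ U) →
        (∀ m ∈ U, (dual A).mulVec m ≠ m) →
        ∀ (α : Vec d) (ξ ζ : IVec d → ℂ),
          (∀ m ∈ U, ‖ξ m‖ ≤ c₀ * inorm m ^ (-r)) →
          (∀ m ∈ U, ζ ((dual A).mulVec m) * eF ((dual A).mulVec m) α - ζ m = ξ m) →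
          (∀ ε : ℝ, 0 < ε → ∃ R : ℝ, ∀ m ∈ U, R ≤ inorm m → ‖ζ m‖ < ε) →
          ∀ m ∈ U, ‖ζ m‖ ≤ c * inorm m ^ (-r + 1) := by
  obtain ⟨h2, -⟩ := hA2
  have hr1 : (0:ℝ) < r - 1 := by linarith
  have hinv : (0:ℝ) < 1 / (r - 1) := by positivity
  set c₁ : ℝ := max c₀ 0 + 1 with hc₁def
  have hc₁ : 0 < c₁ := by positivity
  have hc₀c₁ : c₀ ≤ c₁ := by
    have h := le_max_left c₀ (0:ℝ)
    rw [hc₁def]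
    linarith
  have h2pow : (0:ℝ) < (2:ℝ) ^ r := Real.rpow_pos_of_pos two_pos r
  refine ⟨c₁ * 2 ^ r * (2 * (1 + 1 / (r - 1))), by positivity, ?_⟩
  intro U hU1 hU2 α ξ ζ hξ heq hlim m hm
  have hzp : ∀ k : ℤ, zpowM (dual A) k = 1 + k • hat A := zpow_dual hdetA h2
  have hHH := hat_mul_hat hdetA h2
  set v : IVec d := (hat A).mulVec m with hv
  have hDm : ∀ x : IVec d, (dual A).mulVec x = x + (hat A).mulVec x := by
    intro x
    rw [dual_eq_one_add_hat, Matrix.add_mulVec, Matrix.one_mulVec]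
  have hm0 : m ≠ 0 := by
    intro h
    apply hU2 m hm
    rw [h, Matrix.mulVec_zero]
  have hv0 : v ≠ 0 := by
    intro h
    apply hU2 m hm
    rw [hDm m, ← hv, h, add_zero]
  have hHv : (hat A).mulVec v = 0 := by
    rw [hv, Matrix.mulVec_mulVec, hHH, Matrix.zero_mulVec]
  set P : ℝ := ∑ i, (m i : ℝ) * (v i : ℝ) with hPdef
  set ε : ℤ := if 0 ≤ P then 1 else -1 with hεdef
  have hεcases : ε = 1 ∨ ε = -1 := by
    rw [hεdef]; split_ifs <;> simp
  have hε2 : ((ε:ℝ)) ^ 2 = 1 := by rcases hεcases with h | h <;> rw [h] <;> norm_num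
  have hεP : 0 ≤ (ε:ℝ) * P := by
    rw [hεdef]; split_ifs with h
    · simpa using h
    · push_neg at h; push_cast; nlinarith
  set mj : ℕ → IVec d := fun j => m + (ε * (j:ℤ)) • v with hmjdef
  have hmjU : ∀ j : ℕ, mj j ∈ U := by
    intro j
    have h := hU1 m hm (ε * (j:ℤ))
    rwa [hzp, Matrix.add_mulVec, Matrix.one_mulVec, Matrix.smul_mulVec, ← hv] at h
  set M : ℝ := inorm m with hMdef
  have hM1 : 1 ≤ M := one_le_inorm hm0
  have hM0 : (0:ℝ) < M := lt_of_lt_of_le one_pos hM1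
  have hlow : ∀ j : ℕ, (M + j) / 2 ≤ inorm (mj j) := by
    intro j
    have hsq := sq_inorm_add m v (ε * (j:ℤ))
    have hv1 : 1 ≤ inorm v ^ 2 := by nlinarith [one_le_inorm hv0, inorm_nonneg' v]
    have hj0 : (0:ℝ) ≤ (j:ℝ) := Nat.cast_nonneg j
    have hkey : M ^ 2 + (j:ℝ) ^ 2 ≤ inorm (mj j) ^ 2 := by
      have h1 : inorm (mj j) ^ 2
          = M ^ 2 + 2 * ((ε:ℝ) * (j:ℝ)) * P + ((ε:ℝ) * (j:ℝ)) ^ 2 * inorm v ^ 2 := by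
        rw [hmjdef]
        simpa [hMdef, hPdef] using (by push_cast [sq_inorm_add m v (ε * (j:ℤ))]; ring_nf :
          inorm (m + (ε * (j:ℤ)) • v) ^ 2
            = inorm m ^ 2 + 2 * ((ε:ℝ) * (j:ℝ)) * (∑ i, (m i : ℝ) * (v i : ℝ))
              + ((ε:ℝ) * (j:ℝ)) ^ 2 * inorm v ^ 2)
      rw [h1]
      have h3 : ((ε:ℝ) * (j:ℝ)) ^ 2 * inorm v ^ 2 = (j:ℝ) ^ 2 * inorm v ^ 2 := by
        rw [mul_pow, hε2, one_mul]
      nlinarith [mul_nonneg hj0 hεP]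
    have h4 : ((M + j) / 2) ^ 2 ≤ inorm (mj j) ^ 2 := by nlinarith
    have h5 : (0:ℝ) ≤ (M + j) / 2 := by positivity
    calc (M + j) / 2 = Real.sqrt (((M + j) / 2) ^ 2) := (Real.sqrt_sq h5).symm
      _ ≤ Real.sqrt (inorm (mj j) ^ 2) := Real.sqrt_le_sqrt h4
      _ = inorm (mj j) := Real.sqrt_sq (inorm_nonneg' _)
  have hg : ∀ j : ℕ, ‖ξ (mj j)‖ ≤ c₁ * 2 ^ r * (M + (j:ℕ)) ^ (-r) := by
    intro j
    have hj0 : (0:ℝ) ≤ (j:ℝ) := Nat.cast_nonneg j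
    have hpos : (0:ℝ) < (M + j) / 2 := by positivity
    have hb : inorm (mj j) ^ (-r) ≤ ((M + j) / 2) ^ (-r) :=
      Real.rpow_le_rpow_of_nonpos hpos (hlow j) (by linarith)
    have h3 : ((M + j) / 2) ^ (-r) = 2 ^ r * (M + j) ^ (-r) := by
      rw [Real.div_rpow (by positivity) (by norm_num), Real.rpow_neg (by norm_num : (0:ℝ) ≤ 2),
        div_eq_mul_inv, inv_inv, mul_comm]
    calc ‖ξ (mj j)‖ ≤ c₀ * inorm (mj j) ^ (-r) := hξ _ (hmjU j)
      _ ≤ c₁ * inorm (mj j) ^ (-r) :=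
          mul_le_mul_of_nonneg_right hc₀c₁ (Real.rpow_nonneg (inorm_nonneg' _) _)
      _ ≤ c₁ * ((M + j) / 2) ^ (-r) := mul_le_mul_of_nonneg_left hb hc₁.le
      _ = c₁ * 2 ^ r * (M + (j:ℕ)) ^ (-r) := by rw [h3]; ring
  have hDstep : ∀ k : ℤ, (dual A).mulVec (m + k • v) = m + (k + 1) • v := by
    intro k
    rw [hDm, Matrix.mulVec_add, Matrix.mulVec_smul, hHv, ← hv, smul_zero, add_zero, add_smul,
      one_smul]
    abel
  have hstep : ∀ N : ℕ, ‖ζ (mj N)‖ ≤ ‖ζ (mj (N + 1))‖ + (‖ξ (mj N)‖ + ‖ξ (mj (N + 1))‖) := by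
    intro N
    rcases hεcases with he | he
    · have h := heq (mj N) (hmjU N)
      have hd : (dual A).mulVec (mj N) = mj (N + 1) := by
        show (dual A).mulVec (m + (ε * (N:ℤ)) • v) = m + (ε * ((N:ℕ) + 1 : ℕ)) • v
        rw [hDstep (ε * (N:ℤ))]
        have : (ε * (N:ℤ) + 1) = ε * (((N:ℕ) + 1 : ℕ) : ℤ) := by rw [he]; push_cast; ring
        rw [this]
      rw [hd] at h
      have hz : ζ (mj N) = ζ (mj (N + 1)) * eF (mj (N + 1)) α - ξ (mj N) := by
        rw [← h]; ring
      calc ‖ζ (mj N)‖ = ‖ζ (mj (N + 1)) * eF (mj (N + 1)) α - ξ (mj N)‖ := by rw [hz]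
        _ ≤ ‖ζ (mj (N + 1)) * eF (mj (N + 1)) α‖ + ‖ξ (mj N)‖ := norm_sub_le _ _
        _ = ‖ζ (mj (N + 1))‖ + ‖ξ (mj N)‖ := by rw [norm_mul, eF_norm, mul_one]
        _ ≤ _ := by have := norm_nonneg (ξ (mj (N + 1))); linarith
    · have h := heq (mj (N + 1)) (hmjU (N + 1))
      have hd : (dual A).mulVec (mj (N + 1)) = mj N := by
        show (dual A).mulVec (m + (ε * (((N:ℕ) + 1 : ℕ) : ℤ)) • v) = m + (ε * (N:ℤ)) • v
        rw [hDstep]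
        have : (ε * (((N:ℕ) + 1 : ℕ) : ℤ) + 1) = ε * (N:ℤ) := by rw [he]; push_cast; ring
        rw [this]
      rw [hd] at h
      have hz : ζ (mj N) * eF (mj N) α = ζ (mj (N + 1)) + ξ (mj (N + 1)) := by
        rw [← h]; ring
      calc ‖ζ (mj N)‖ = ‖ζ (mj N) * eF (mj N) α‖ := by rw [norm_mul, eF_norm, mul_one]
        _ = ‖ζ (mj (N + 1)) + ξ (mj (N + 1))‖ := by rw [hz]
        _ ≤ ‖ζ (mj (N + 1))‖ + ‖ξ (mj (N + 1))‖ := norm_add_le _ _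
        _ ≤ _ := by have := norm_nonneg (ξ (mj N)); linarith
  have hmj0 : mj 0 = m := by
    show m + (ε * ((0:ℕ):ℤ)) • v = m
    norm_num
  have hind : ∀ N : ℕ, ‖ζ m‖ ≤ ‖ζ (mj N)‖
      + ∑ j ∈ Finset.range N, (‖ξ (mj j)‖ + ‖ξ (mj (j + 1))‖) := by
    intro N
    induction N with
    | zero => rw [hmj0]; simp
    | succ N ih =>
      have h := hstep N
      rw [Finset.sum_range_succ]
      linarith
  have hsum : ∀ N : ℕ, ∑ j ∈ Finset.range N, (‖ξ (mj j)‖ + ‖ξ (mj (j + 1))‖)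
      ≤ c₁ * 2 ^ r * (2 * (1 + 1 / (r - 1))) * M ^ (-r + 1) := by
    intro N
    have e1 : ∑ j ∈ Finset.range N, ‖ξ (mj j)‖
        ≤ c₁ * 2 ^ r * ((1 + 1 / (r - 1)) * M ^ (-r + 1)) := by
      calc ∑ j ∈ Finset.range N, ‖ξ (mj j)‖
          ≤ ∑ j ∈ Finset.range N, c₁ * 2 ^ r * (M + (j:ℕ)) ^ (-r) :=
            Finset.sum_le_sum fun j _ => hg j
        _ = c₁ * 2 ^ r * ∑ j ∈ Finset.range N, (M + (j:ℕ)) ^ (-r) := by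
            rw [Finset.mul_sum]
        _ ≤ _ := mul_le_mul_of_nonneg_left (aux_sum hr hM1 N) (by positivity)
    have e2 : ∑ j ∈ Finset.range N, ‖ξ (mj (j + 1))‖
        ≤ c₁ * 2 ^ r * ((1 + 1 / (r - 1)) * M ^ (-r + 1)) := by
      have hstep2 : ∀ j ∈ Finset.range N,
          ‖ξ (mj (j + 1))‖ ≤ c₁ * 2 ^ r * ((M + 1) + (j:ℕ)) ^ (-r) := by
        intro j _
        have h := hg (j + 1)
        have hc : (M + ((j + 1 : ℕ) : ℝ)) = (M + 1) + (j:ℕ) := by push_cast; ring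
        rwa [hc] at h
      have hM1' : (1:ℝ) ≤ M + 1 := by linarith
      have hmono : (M + 1) ^ (-r + 1) ≤ M ^ (-r + 1) :=
        Real.rpow_le_rpow_of_nonpos hM0 (by linarith) (by linarith)
      calc ∑ j ∈ Finset.range N, ‖ξ (mj (j + 1))‖
          ≤ ∑ j ∈ Finset.range N, c₁ * 2 ^ r * ((M + 1) + (j:ℕ)) ^ (-r) :=
            Finset.sum_le_sum hstep2
        _ = c₁ * 2 ^ r * ∑ j ∈ Finset.range N, ((M + 1) + (j:ℕ)) ^ (-r) := by
            rw [Finset.mul_sum]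
        _ ≤ c₁ * 2 ^ r * ((1 + 1 / (r - 1)) * (M + 1) ^ (-r + 1)) :=
            mul_le_mul_of_nonneg_left (aux_sum hr hM1' N) (by positivity)
        _ ≤ c₁ * 2 ^ r * ((1 + 1 / (r - 1)) * M ^ (-r + 1)) := by
            apply mul_le_mul_of_nonneg_left _ (by positivity)
            exact mul_le_mul_of_nonneg_left hmono (by positivity)
    have hre : c₁ * 2 ^ r * (2 * (1 + 1 / (r - 1))) * M ^ (-r + 1)
        = c₁ * 2 ^ r * ((1 + 1 / (r - 1)) * M ^ (-r + 1))
          + c₁ * 2 ^ r * ((1 + 1 / (r - 1)) * M ^ (-r + 1)) := by ring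
    rw [Finset.sum_add_distrib, hre]
    exact add_le_add e1 e2
  show ‖ζ m‖ ≤ c₁ * 2 ^ r * (2 * (1 + 1 / (r - 1))) * inorm m ^ (-r + 1)
  rw [← hMdef]
  by_contra hcon
  push_neg at hcon
  set S : ℝ := c₁ * 2 ^ r * (2 * (1 + 1 / (r - 1))) * M ^ (-r + 1) with hSdef
  obtain ⟨R, hR⟩ := hlim (‖ζ m‖ - S) (by linarith)
  set N : ℕ := ⌈(2:ℝ) * max R 0⌉₊ with hNdef
  have hN : R ≤ inorm (mj N) := by
    have h1 : (2:ℝ) * max R 0 ≤ (N:ℝ) := Nat.le_ceil _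
    have h2 := hlow N
    have h3 : R ≤ max R 0 := le_max_left _ _
    linarith
  have h4 := hR (mj N) (hmjU N) hN
  have h5 := hind N
  have h6 := hsum N
  linarith

end ParabolicKAM
end

section
/- Let a = A+α and b = B+β be commuting affine parabolic maps of T^d, and suppose the affine action ⟨a,b⟩ has no rank-one factor which is the identity or genuinely parabolic. Let m ∈ ℤ^d satisfy Â²m = 0. If B̂^s m = 0 for some s ≥ 2, then ÂB̂^{s−1}m = 0. -/
open MeasureTheory

namespace ParabolicKAM

open Matrix

private lemma pair_aux {d : ℕ} (M : Mat d) (v : IVec d) (x : Vec d) :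
    (∑ i, (((Mᵀ).mulVec v) i : ℝ) * x i) = ∑ i, (v i : ℝ) * ((rmat M).mulVec x) i := by
  simp only [Matrix.mulVec, dotProduct, rmat, Matrix.map_apply,
    Matrix.transpose_apply]
  push_cast
  simp only [Finset.sum_mul, Finset.mul_sum]
  rw [Finset.sum_comm]
  exact Finset.sum_congr rfl fun i _ => Finset.sum_congr rfl fun j _ => by ring

private lemma TAB_pair {d : ℕ} {A B : Mat d} {α β : Vec d} (h : TAB A B α β) (v : IVec d) :
    (∑ i, (((A - 1)ᵀ.mulVec v) i : ℝ) * β i)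
      = ∑ i, (((B - 1)ᵀ.mulVec v) i : ℝ) * α i := by
  have h' : (rmat (A - 1)).mulVec β = (rmat (B - 1)).mulVec α := h
  rw [pair_aux (A - 1) v β, pair_aux (B - 1) v α, h']

private lemma affT_one_zero (n : ℕ) : affT (1 : Mat n) (0 : Td n) = id := by
  funext x i
  simp [affT, Matrix.one_apply, ite_smul, Finset.sum_ite_eq, Pi.zero_apply]

private lemma inv_comm {d : ℕ} {X Y : Mat d} (h1 : X⁻¹ * X = 1) (h2 : X * X⁻¹ = 1)
    (h3 : X * Y = Y * X) : X⁻¹ * Y = Y * X⁻¹ := by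
  calc X⁻¹ * Y = X⁻¹ * Y * (X * X⁻¹) := by rw [h2, mul_one]
    _ = X⁻¹ * (Y * X) * X⁻¹ := by simp only [mul_assoc]
    _ = X⁻¹ * (X * Y) * X⁻¹ := by rw [h3]
    _ = (X⁻¹ * X) * (Y * X⁻¹) := by simp only [mul_assoc]
    _ = Y * X⁻¹ := by rw [h1, one_mul]

private lemma intertwine_line {d : ℕ} (M : Mat d) (γ : Vec d) (v : IVec d)
    (hfix : Mᵀ.mulVec v = v) (hzero : (∑ j, (v j : ℝ) * γ j) = 0) :
    projT (Matrix.of fun (_ : Fin 1) j => v j) ∘ affT M (toT γ)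
      = affT (1 : Mat 1) (0 : Td 1) ∘ projT (Matrix.of fun (_ : Fin 1) j => v j) := by
  rw [affT_one_zero, Function.id_comp]
  funext x i
  show (∑ j, v j • (affT M (toT γ) x j)) = ∑ j, v j • x j
  unfold affT toT
  simp only [smul_add, Finset.sum_add_distrib]
  have h1 : (∑ j, v j • ∑ k, M j k • x k) = ∑ k, v k • x k := by
    simp only [Finset.smul_sum, smul_smul]
    rw [Finset.sum_comm]
    calc ∑ k, ∑ j, (v j * M j k) • x k
        = ∑ k, (∑ j, v j * M j k) • x k :=
          Finset.sum_congr rfl fun k _ => (Finset.sum_smul).symm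
      _ = ∑ k, ((Mᵀ.mulVec v) k) • x k := by
          refine Finset.sum_congr rfl fun k _ => ?_
          congr 1
          simp [Matrix.mulVec, dotProduct, Matrix.transpose_apply, mul_comm]
      _ = ∑ k, v k • x k := by rw [hfix]
  have h2 : (∑ j, v j • ((γ j : ℝ) : AddCircle (1 : ℝ))) = 0 := by
    have e : ∀ j, v j • ((γ j : ℝ) : AddCircle (1 : ℝ))
        = (QuotientAddGroup.mk' (AddSubgroup.zmultiples (1 : ℝ))) ((v j : ℝ) * γ j) := by
      intro j
      have h0 : ((γ j : ℝ) : AddCircle (1 : ℝ))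
          = (QuotientAddGroup.mk' (AddSubgroup.zmultiples (1 : ℝ))) (γ j) := rfl
      rw [h0, ← map_zsmul, zsmul_eq_mul]
    rw [Finset.sum_congr rfl fun j _ => e j, ← map_sum, hzero, map_zero]
  rw [h1, h2, add_zero]

/-- **Lemma.** Let `a = A+α`, `b = B+β` be commuting affine parabolic maps, and suppose
the affine action `⟨a,b⟩` has no rank-one factor which is the identity or genuinely
parabolic. Let `m` satisfy `Â² m = 0`. If `B̂^s m = 0` for some `s ≥ 2`, then
`Â B̂^{s-1} m = 0`. -/
theorem hatA_hatB_pow_eq_zero (d : ℕ) (A B : Mat d) (α β : Vec d)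
    (hApar : IsParabolic A) (hBpar : IsParabolic B)
    (hcomm : A * B = B * A) (hTAB : TAB A B α β)
    (hnofactor : ¬ ∃ F : RankOneFactorData d A B α β,
      F.IsIdentity ∨ F.IsGenuinelyParabolic) :
    ∀ m : IVec d, ((hat A) ^ 2).mulVec m = 0 →
      ∀ s : ℕ, 2 ≤ s → ((hat B) ^ s).mulVec m = 0 →
        ((hat A) * (hat B) ^ (s - 1)).mulVec m = 0 := by
  intro m hA2 s hs hBs
  by_contra hwne
  -- unipotence of the transposes
  obtain ⟨SA, hSA⟩ := hApar
  obtain ⟨SB, hSB⟩ := hBpar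
  have hNT : IsNilpotent (Aᵀ - 1) := ⟨SA, by
    rw [← Matrix.transpose_one, ← Matrix.transpose_sub, ← Matrix.transpose_pow, hSA,
      Matrix.transpose_zero]⟩
  have hNU : IsNilpotent (Bᵀ - 1) := ⟨SB, by
    rw [← Matrix.transpose_one, ← Matrix.transpose_sub, ← Matrix.transpose_pow, hSB,
      Matrix.transpose_zero]⟩
  have hUnitT : IsUnit Aᵀ := by simpa using hNT.isUnit_add_one
  have hUnitU : IsUnit Bᵀ := by simpa using hNU.isUnit_add_one
  have hdT : IsUnit (Aᵀ).det := (Matrix.isUnit_iff_isUnit_det _).mp hUnitT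
  have hdU : IsUnit (Bᵀ).det := (Matrix.isUnit_iff_isUnit_det _).mp hUnitU
  have hTi : Aᵀ⁻¹ * Aᵀ = 1 := Matrix.nonsing_inv_mul _ hdT
  have hTi' : Aᵀ * Aᵀ⁻¹ = 1 := Matrix.mul_nonsing_inv _ hdT
  have hUi : Bᵀ⁻¹ * Bᵀ = 1 := Matrix.nonsing_inv_mul _ hdU
  have hUi' : Bᵀ * Bᵀ⁻¹ = 1 := Matrix.mul_nonsing_inv _ hdU
  have hTU : Aᵀ * Bᵀ = Bᵀ * Aᵀ := by
    rw [← Matrix.transpose_mul, ← Matrix.transpose_mul, hcomm]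
  have cAbU : Aᵀ⁻¹ * Bᵀ = Bᵀ * Aᵀ⁻¹ := inv_comm hTi hTi' hTU
  have cAbBb : Bᵀ⁻¹ * Aᵀ⁻¹ = Aᵀ⁻¹ * Bᵀ⁻¹ := inv_comm hUi hUi' cAbU.symm
  have c1 : Commute (dual A) (dual B) := cAbBb.symm
  have c2 : Commute (hat A) (hat B) :=
    (c1.sub_left (Commute.one_left (dual B))).sub_right (Commute.one_right (dual A - 1))
  have chAU : Commute (hat A) Bᵀ := by
    have c0 : Commute (dual A) Bᵀ := cAbU
    exact c0.sub_left (Commute.one_left _)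
  have chBU : Commute (hat B) Bᵀ := by
    have c0 : Commute (dual B) Bᵀ := by
      show Bᵀ⁻¹ * Bᵀ = Bᵀ * Bᵀ⁻¹
      rw [hUi, hUi']
    exact c0.sub_left (Commute.one_left _)
  have idT : Aᵀ * (hat A) = 1 - Aᵀ := by
    show Aᵀ * (Aᵀ⁻¹ - 1) = 1 - Aᵀ
    rw [mul_sub, mul_one, hTi']
  have idU : Bᵀ * (hat B) = 1 - Bᵀ := by
    show Bᵀ * (Bᵀ⁻¹ - 1) = 1 - Bᵀ
    rw [mul_sub, mul_one, hUi']
  have idT' : Aᵀ - 1 = -(Aᵀ * (hat A)) := by rw [idT, neg_sub]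
  have idU' : Bᵀ - 1 = -(Bᵀ * (hat B)) := by rw [idU, neg_sub]
  -- vector computations
  have hAA : ((hat A) * (hat A)).mulVec m = 0 := by rw [← pow_two]; exact hA2
  have hs1 : s - 1 + 1 = s := by omega
  have hs2 : s - 2 + 1 = s - 1 := by omega
  set w : IVec d := ((hat A) * (hat B) ^ (s - 1)).mulVec m with hwdef
  have hAw : (hat A).mulVec w = 0 := by
    rw [hwdef, Matrix.mulVec_mulVec, ← mul_assoc, ((c2.mul_left c2).pow_right (s - 1)).eq,
      ← Matrix.mulVec_mulVec, hAA, Matrix.mulVec_zero]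
  have hTw : Aᵀ.mulVec w = w := by
    have h0 : (Aᵀ * (hat A)).mulVec w = (1 - Aᵀ).mulVec w := by rw [idT]
    rw [← Matrix.mulVec_mulVec, hAw, Matrix.mulVec_zero, Matrix.sub_mulVec,
      Matrix.one_mulVec] at h0
    exact (sub_eq_zero.mp h0.symm).symm
  have hBw : (hat B).mulVec w = 0 := by
    have e : (hat B) * ((hat A) * (hat B) ^ (s - 1)) = (hat A) * (hat B) ^ s := by
      rw [← mul_assoc, ← c2.eq, mul_assoc, ← pow_succ', hs1]
    rw [hwdef, Matrix.mulVec_mulVec, e, ← Matrix.mulVec_mulVec, hBs, Matrix.mulVec_zero]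
  have hUw : Bᵀ.mulVec w = w := by
    have h0 : (Bᵀ * (hat B)).mulVec w = (1 - Bᵀ).mulVec w := by rw [idU]
    rw [← Matrix.mulVec_mulVec, hBw, Matrix.mulVec_zero, Matrix.sub_mulVec,
      Matrix.one_mulVec] at h0
    exact (sub_eq_zero.mp h0.symm).symm
  set u : IVec d := ((hat B) ^ (s - 1)).mulVec m with hudef
  have hAu : (hat A).mulVec u = w := by
    rw [hudef, hwdef, Matrix.mulVec_mulVec]
  have hTmu : (Aᵀ - 1).mulVec u = -w := by
    rw [idT', Matrix.neg_mulVec, ← Matrix.mulVec_mulVec, hAu, hTw]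
  have hUmu : (Bᵀ - 1).mulVec u = 0 := by
    have hBu : (hat B).mulVec u = 0 := by
      rw [hudef, Matrix.mulVec_mulVec, ← pow_succ', hs1, hBs]
    rw [idU', Matrix.neg_mulVec, ← Matrix.mulVec_mulVec, hBu, Matrix.mulVec_zero, neg_zero]
  set q : IVec d := ((hat B) ^ (s - 2) * (hat A)).mulVec m with hqdef
  have hAq : (hat A).mulVec q = 0 := by
    rw [hqdef, Matrix.mulVec_mulVec, ← mul_assoc, (c2.pow_right (s - 2)).eq, mul_assoc,
      ← Matrix.mulVec_mulVec, hAA, Matrix.mulVec_zero]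
  have hBq : (hat B).mulVec q = w := by
    rw [hqdef, hwdef, Matrix.mulVec_mulVec, ← mul_assoc, ← pow_succ', hs2,
      ← (c2.pow_right (s - 1)).eq]
  set v₁ : IVec d := -(Bᵀ.mulVec q) with hvdef
  have hTv : (Aᵀ - 1).mulVec v₁ = 0 := by
    rw [hvdef, Matrix.mulVec_neg, Matrix.mulVec_mulVec, idT', neg_mul, Matrix.neg_mulVec,
      neg_neg, mul_assoc, chAU.eq, ← mul_assoc, ← Matrix.mulVec_mulVec, hAq,
      Matrix.mulVec_zero]
  have hUv : (Bᵀ - 1).mulVec v₁ = w := by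
    rw [hvdef, Matrix.mulVec_neg, Matrix.mulVec_mulVec, idU', neg_mul, Matrix.neg_mulVec,
      neg_neg, mul_assoc, chBU.eq, ← mul_assoc, ← Matrix.mulVec_mulVec,
      ← Matrix.mulVec_mulVec, hBq, hUw, hUw]
  -- pairing with the admissibility relation
  have htrA : (A - 1)ᵀ = Aᵀ - 1 := by rw [Matrix.transpose_sub, Matrix.transpose_one]
  have htrB : (B - 1)ᵀ = Bᵀ - 1 := by rw [Matrix.transpose_sub, Matrix.transpose_one]
  have p1 := TAB_pair hTAB u
  rw [htrA, htrB, hTmu, hUmu] at p1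
  have hwβ : (∑ i, (w i : ℝ) * β i) = 0 := by
    simp only [Pi.neg_apply, Int.cast_neg, neg_mul, Finset.sum_neg_distrib, Pi.zero_apply,
      Int.cast_zero, zero_mul, Finset.sum_const_zero] at p1
    linarith
  have p2 := TAB_pair hTAB v₁
  rw [htrA, htrB, hTv, hUv] at p2
  have hwα : (∑ i, (w i : ℝ) * α i) = 0 := by
    simp only [Pi.zero_apply, Int.cast_zero, zero_mul, Finset.sum_const_zero] at p2
    exact p2.symm
  -- extract the gcd to make the frequency primitive
  obtain ⟨i₀, hi₀⟩ := Function.ne_iff.mp hwne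
  have hgne : Finset.univ.gcd w ≠ 0 := by
    intro h
    exact hi₀ (Finset.gcd_eq_zero_iff.mp h i₀ (Finset.mem_univ _))
  obtain ⟨w₀, hw0eq, hw0gcd⟩ := Finset.extract_gcd w ⟨i₀, Finset.mem_univ i₀⟩
  have hwsmul : w = Finset.univ.gcd w • w₀ := by
    funext i
    rw [Pi.smul_apply, smul_eq_mul]
    exact hw0eq i (Finset.mem_univ i)
  have hTw0 : Aᵀ.mulVec w₀ = w₀ := by
    have h1 : Aᵀ.mulVec (Finset.univ.gcd w • w₀) = Finset.univ.gcd w • w₀ := by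
      rw [← hwsmul]; exact hTw
    rw [Matrix.mulVec_smul] at h1
    exact smul_right_injective (IVec d) hgne h1
  have hUw0 : Bᵀ.mulVec w₀ = w₀ := by
    have h1 : Bᵀ.mulVec (Finset.univ.gcd w • w₀) = Finset.univ.gcd w • w₀ := by
      rw [← hwsmul]; exact hUw
    rw [Matrix.mulVec_smul] at h1
    exact smul_right_injective (IVec d) hgne h1
  have hgR : ((Finset.univ.gcd w : ℤ) : ℝ) ≠ 0 := Int.cast_ne_zero.mpr hgne
  have hw0α : (∑ i, (w₀ i : ℝ) * α i) = 0 := by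
    have h2 : ((Finset.univ.gcd w : ℤ) : ℝ) * ∑ i, (w₀ i : ℝ) * α i = 0 := by
      rw [Finset.mul_sum, ← hwα]
      refine Finset.sum_congr rfl fun i _ => ?_
      rw [hw0eq i (Finset.mem_univ i)]
      push_cast
      ring
    rcases mul_eq_zero.mp h2 with h | h
    · exact absurd h hgR
    · exact h
  have hw0β : (∑ i, (w₀ i : ℝ) * β i) = 0 := by
    have h2 : ((Finset.univ.gcd w : ℤ) : ℝ) * ∑ i, (w₀ i : ℝ) * β i = 0 := by
      rw [Finset.mul_sum, ← hwβ]
      refine Finset.sum_congr rfl fun i _ => ?_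
      rw [hw0eq i (Finset.mem_univ i)]
      push_cast
      ring
    rcases mul_eq_zero.mp h2 with h | h
    · exact absurd h hgR
    · exact h
  -- Bezout: the primitive vector pairs to 1 with some integer vector
  have hbez : ∃ y : IVec d, (∑ j, w₀ j * y j) = 1 := by
    let φ : (Fin d → ℤ) →+ ℤ :=
      { toFun := fun x => ∑ j, w₀ j * x j
        map_zero' := by simp
        map_add' := fun x y => by
          simp [mul_add, Finset.sum_add_distrib] }
    obtain ⟨a, ha⟩ := Int.subgroup_cyclic φ.range
    have hmem : ∀ i, w₀ i ∈ φ.range := by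
      intro i
      refine AddMonoidHom.mem_range.mpr ⟨Pi.single i 1, ?_⟩
      simp [φ, Pi.single_apply, mul_ite, Finset.sum_ite_eq']
    have hdvd : a ∣ Finset.univ.gcd w₀ := by
      refine Finset.dvd_gcd fun i _ => ?_
      have h := hmem i
      rw [ha, AddSubgroup.mem_closure_singleton] at h
      obtain ⟨n, hn⟩ := h
      refine ⟨n, ?_⟩
      rw [← hn, zsmul_eq_mul]
      push_cast
      ring
    rw [hw0gcd] at hdvd
    have h1mem : (1 : ℤ) ∈ φ.range := by
      rw [ha, AddSubgroup.mem_closure_singleton]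
      obtain ⟨b, hb⟩ := hdvd
      refine ⟨b, ?_⟩
      rw [zsmul_eq_mul]
      push_cast
      rw [mul_comm]
      exact hb.symm
    obtain ⟨y, hy⟩ := AddMonoidHom.mem_range.mp h1mem
    exact ⟨y, hy⟩
  -- build the identity rank-one factor
  have hsurj : Function.Surjective
      fun x : Fin d → ℤ => (Matrix.of fun (_ : Fin 1) j => w₀ j).mulVec x := by
    intro t
    obtain ⟨y, hy⟩ := hbez
    refine ⟨t 0 • y, funext fun i => ?_⟩
    have hi : i = 0 := Subsingleton.elim i 0
    subst hi
    show ∑ j, w₀ j * (t 0 • y) j = t 0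
    calc ∑ j, w₀ j * (t 0 • y) j = t 0 * ∑ j, w₀ j * y j := by
          rw [Finset.mul_sum]
          exact Finset.sum_congr rfl fun j _ => by
            simp [Pi.smul_apply, smul_eq_mul]; ring
      _ = t 0 := by rw [hy, mul_one]
  have hintA : projT (Matrix.of fun (_ : Fin 1) j => w₀ j) ∘ affT A (toT α)
      = affT (1 : Mat 1) (0 : Td 1) ∘ projT (Matrix.of fun (_ : Fin 1) j => w₀ j) :=
    intertwine_line A α w₀ hTw0 hw0α
  have hintB : projT (Matrix.of fun (_ : Fin 1) j => w₀ j) ∘ affT B (toT β)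
      = affT (1 : Mat 1) (0 : Td 1) ∘ projT (Matrix.of fun (_ : Fin 1) j => w₀ j) :=
    intertwine_line B β w₀ hUw0 hw0β
  have hgen : ⇑(1 : Equiv.Perm (Td 1)) = affT (1 : Mat 1) (0 : Td 1) := by
    rw [affT_one_zero]
    exact Equiv.Perm.coe_one
  have hIsAff : IsAffT (⇑(1 : Equiv.Perm (Td 1))) := ⟨1, 0, hgen⟩
  exact hnofactor ⟨⟨1, Nat.one_pos, Matrix.of fun (_ : Fin 1) j => w₀ j, hsurj, 1, 1, 0, 0,
    hintA, hintB,
    ⟨1, hIsAff, ⟨1, Subgroup.one_mem _, hgen⟩, ⟨1, Subgroup.one_mem _, hgen⟩⟩⟩,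
    Or.inl ⟨affT_one_zero 1, affT_one_zero 1⟩⟩

end ParabolicKAM
end
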